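/- arXiv:1610.06768 — 3 statements merged into one kernel-verified Lean document; each statement's English description precedes it below -/
import Mathlib

section
/- For every finite set D of definite clauses, every Γ, every set A of annotated atoms, every atom P(t̄), and every k ∈ ℕ: μ(D) ⊨ ⟦Γ, A⟧_k ∧ P(t̄) ⇒ ⟦Γ, A ∪ {P^{∅,∘}(t̄)}⟧_k, i.e., the implication holds under the least predicate interpretation μ(D) for every integer assignment. -/
/-! Machinery for the inductive proof system for Horn constraint solving. -/

/-- Term variables. -/
abbrev Var := ℕ

/-- Assignments of integers to term variables. -/
abbrev Assign := Var → ℤ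

/-- Linear integer arithmetic terms. -/
inductive Term : Type where
  | var : Var → Term
  | const : ℤ → Term
  | add : Term → Term → Term

def Term.eval (s : Assign) : Term → ℤ
  | .var x => s x
  | .const n => n
  | .add t u => t.eval s + u.eval s

def Term.fv : Term → Finset Var
  | .var x => {x}
  | .const _ => ∅
  | .add t u => t.fv ∪ u.fv

/-- Substitutions of terms for term variables. -/
abbrev Subst := Var → Term

def Term.subst (σ : Subst) : Term → Term
  | .var x => σ x
  | .const n => .const n
  | .add t u => .add (t.subst σ) (u.subst σ)

/-- Atom-free linear integer arithmetic formulas; the universal quantifier `all` over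
term variables is allowed where explicitly used. -/
inductive Fml : Type where
  | le : Term → Term → Fml
  | tt : Fml
  | ff : Fml
  | not : Fml → Fml
  | and : Fml → Fml → Fml
  | or : Fml → Fml → Fml
  | all : Var → Fml → Fml

def Fml.eval : Fml → Assign → Prop
  | .le t u, s => t.eval s ≤ u.eval s
  | .tt, _ => True
  | .ff, _ => False
  | .not f, s => ¬ f.eval s
  | .and f g, s => f.eval s ∧ g.eval s
  | .or f g, s => f.eval s ∨ g.eval s
  | .all x f, s => ∀ n : ℤ, f.eval (Function.update s x n)

def Fml.fv : Fml → Finset Var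
  | .le t u => t.fv ∪ u.fv
  | .tt => ∅
  | .ff => ∅
  | .not f => f.fv
  | .and f g => f.fv ∪ g.fv
  | .or f g => f.fv ∪ g.fv
  | .all x f => f.fv.erase x

def Fml.subst : Fml → Subst → Fml
  | .le t u, σ => .le (t.subst σ) (u.subst σ)
  | .tt, _ => .tt
  | .ff, _ => .ff
  | .not f, σ => .not (f.subst σ)
  | .and f g, σ => .and (f.subst σ) (g.subst σ)
  | .or f g, σ => .or (f.subst σ) (g.subst σ)
  | .all x f, σ => .all x (f.subst (Function.update σ x (Term.var x)))

/-- Equality `t = u` of terms, encoded in QFLIA. -/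
def Fml.eqT (t u : Term) : Fml := .and (.le t u) (.le u t)

def Fml.conjList : List Fml → Fml
  | [] => .tt
  | f :: fs => .and f (Fml.conjList fs)

/-- Universal closure `∀x̄.f` over a list of variables. -/
def Fml.alls (xs : List Var) (f : Fml) : Fml := xs.foldr Fml.all f

/-- Componentwise equality `t̄ = ū` of two tuples of terms, as a formula. -/
def argsEqFml {n : ℕ} (ts us : Fin n → Term) : Fml :=
  Fml.conjList ((List.finRange n).map fun i => Fml.eqT (ts i) (us i))

/-- An atom `P(t̄)`. -/
structure Atom (PV : Type) (ar : PV → ℕ) : Type where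
  pv : PV
  args : Fin (ar pv) → Term

/-- An annotated atom `P^{M,α}(t̄)`: `M` is a finite set of induction identifiers and
`idn` is an induction identifier (`none` encodes the special identifier `∘`).
Annotations do not affect semantics. -/
structure AAtom (PV : Type) (ar : PV → ℕ) : Type where
  pv : PV
  args : Fin (ar pv) → Term
  M : Finset (Option ℕ)
  idn : Option ℕ

/-- A predicate interpretation maps each predicate variable `P` to a subset of `ℤ^(ar P)`. -/
abbrev Interp (PV : Type) (ar : PV → ℕ) := ∀ P : PV, Set (Fin (ar P) → ℤ)

variable {PV : Type} {ar : PV → ℕ}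

def Atom.sat (ρ : Interp PV ar) (s : Assign) (a : Atom PV ar) : Prop :=
  (fun i => (a.args i).eval s) ∈ ρ a.pv

def AAtom.sat (ρ : Interp PV ar) (s : Assign) (a : AAtom PV ar) : Prop :=
  (fun i => (a.args i).eval s) ∈ ρ a.pv

/-- The denotation `⟨P, t̄⟩` of an atom under an assignment (predicate variable together
with the tuple of values of the arguments). -/
def Atom.den (s : Assign) (a : Atom PV ar) : (Q : PV) × (Fin (ar Q) → ℤ) :=
  ⟨a.pv, fun i => (a.args i).eval s⟩

def AAtom.den (s : Assign) (a : AAtom PV ar) : (Q : PV) × (Fin (ar Q) → ℤ) :=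
  ⟨a.pv, fun i => (a.args i).eval s⟩

def AList.sat (ρ : Interp PV ar) (s : Assign) (A : List (AAtom PV ar)) : Prop :=
  ∀ a ∈ A, a.sat ρ s

/-- Satisfaction of a head: `⊥` (encoded `none`) or an atom. -/
def headSat (ρ : Interp PV ar) (s : Assign) : Option (Atom PV ar) → Prop
  | none => False
  | some a => a.sat ρ s

def Atom.fvs (a : Atom PV ar) : Finset Var := Finset.univ.sup fun i => (a.args i).fv
def AAtom.fvs (a : AAtom PV ar) : Finset Var := Finset.univ.sup fun i => (a.args i).fv

def headFvs : Option (Atom PV ar) → Finset Var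
  | none => ∅
  | some a => a.fvs

def AList.fvs (A : List (AAtom PV ar)) : Finset Var := A.foldr (fun a t => a.fvs ∪ t) ∅
def AtomList.fvs (A : List (Atom PV ar)) : Finset Var := A.foldr (fun a t => a.fvs ∪ t) ∅

def Atom.subst (σ : Subst) (a : Atom PV ar) : Atom PV ar :=
  ⟨a.pv, fun i => (a.args i).subst σ⟩

def AAtom.subst (σ : Subst) (a : AAtom PV ar) : AAtom PV ar :=
  ⟨a.pv, fun i => (a.args i).subst σ, a.M, a.idn⟩

def AList.subst (σ : Subst) (A : List (AAtom PV ar)) : List (AAtom PV ar) :=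
  A.map (AAtom.subst σ)

def AtomList.subst (σ : Subst) (A : List (Atom PV ar)) : List (Atom PV ar) :=
  A.map (Atom.subst σ)

def headSubst (σ : Subst) : Option (Atom PV ar) → Option (Atom PV ar)
  | none => none
  | some a => some (a.subst σ)

/-- `A^{M,α}`: annotate every atom of `A` with `M` and `α`. -/
def annotate (A : List (Atom PV ar)) (M : Finset (Option ℕ)) (i : Option ℕ) :
    List (AAtom PV ar) :=
  A.map fun a => ⟨a.pv, a.args, M, i⟩

/-- A renaming of variables, as a substitution. -/
def renSub (ν : Var → Var) : Subst := fun x => Term.var (ν x)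

/-- A definite clause `P(t̄) ⇐ φ' ∧ ⋀A'`. -/
structure DClause (PV : Type) (ar : PV → ℕ) : Type where
  pv : PV
  args : Fin (ar pv) → Term
  fml : Fml
  atoms : List (Atom PV ar)

def DClause.sat (ρ : Interp PV ar) (c : DClause PV ar) : Prop :=
  ∀ s : Assign, (∀ a ∈ c.atoms, a.sat ρ s) ∧ c.fml.eval s →
    (fun i => (c.args i).eval s) ∈ ρ c.pv

def DClause.fvs (c : DClause PV ar) : Finset Var :=
  (Finset.univ.sup fun i => (c.args i).fv) ∪ c.fml.fv ∪ AtomList.fvs c.atoms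

/-- `μ(D)`: the least predicate interpretation satisfying every clause of `D`. -/
def muD (D : List (DClause PV ar)) : Interp PV ar :=
  sInf {ρ : Interp PV ar | ∀ c ∈ D, c.sat ρ}

/-- One unfolding step of `D`:
`Dstep D ρ P = {x̄ | ρ ⊨ D(P)(x̄)}` where `D(P)(x̄) = ⋁ᵢ ∃ȳᵢ.(φᵢ ∧ ⋀Aᵢ ∧ x̄ = t̄ᵢ)`. -/
def Dstep (D : List (DClause PV ar)) (ρ : Interp PV ar) : Interp PV ar :=
  fun P => { v | ∃ c ∈ D, ∃ s : Assign,
    (∀ a ∈ c.atoms, a.sat ρ s) ∧ c.fml.eval s ∧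
    (⟨c.pv, fun i => (c.args i).eval s⟩ : (Q : PV) × (Fin (ar Q) → ℤ)) = ⟨P, v⟩ }

/-- Guards of elements of `Γ`: `•` for user-specified lemmas, `α ▷ P(t̄)` for
induction hypotheses. -/
inductive Guard (PV : Type) (ar : PV → ℕ) : Type where
  | bullet : Guard PV ar
  | hyp : ℕ → Atom PV ar → Guard PV ar

/-- An element `(g, A, φ, h)` of `Γ`. -/
structure GTuple (PV : Type) (ar : PV → ℕ) : Type where
  g : Guard PV ar
  A : List (AAtom PV ar)
  fml : Fml
  h : Option (Atom PV ar)

def Guard.fvs : Guard PV ar → Finset Var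
  | .bullet => ∅
  | .hyp _ a => a.fvs

def GTuple.fvs (γ : GTuple PV ar) : Finset Var :=
  γ.g.fvs ∪ AList.fvs γ.A ∪ γ.fml.fv ∪ headFvs γ.h

def Gamma.fvs (Γ : List (GTuple PV ar)) : Finset Var := Γ.foldr (fun γ t => γ.fvs ∪ t) ∅

/-- The free term variables of a judgment `D; Γ; A; φ ⊢ h`. -/
def judgFvs (Γ : List (GTuple PV ar)) (A : List (AAtom PV ar)) (φ : Fml)
    (h : Option (Atom PV ar)) : Finset Var :=
  Gamma.fvs Γ ∪ AList.fvs A ∪ φ.fv ∪ headFvs h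

/-- `⟦γ⟧(A')`: the semantics of a single element of `Γ` instantiated for the atoms of
`A'` (whose terms are evaluated under the outer assignment `s`); the tuple's own
variables are universally quantified via a fresh assignment `s'`. -/
def GTuple.sem (ρ : Interp PV ar) (A' : List (AAtom PV ar)) (s : Assign)
    (γ : GTuple PV ar) : Prop :=
  match γ.g with
  | .bullet =>
      ∀ s' : Assign, AList.sat ρ s' γ.A ∧ γ.fml.eval s' → headSat ρ s' γ.h
  | .hyp α a₀ =>
      ∀ b ∈ A', (some α : Option ℕ) ∈ b.M →
        ∀ s' : Assign,
          AList.sat ρ s' γ.A ∧ γ.fml.eval s' ∧ Atom.den s' a₀ = AAtom.den s b →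
          headSat ρ s' γ.h

/-- `⟦Γ⟧(A')`. -/
def GammaSem (ρ : Interp PV ar) (Γ : List (GTuple PV ar)) (A' : List (AAtom PV ar))
    (s : Assign) : Prop :=
  ∀ γ ∈ Γ, γ.sem ρ A' s

/-- `⟦Γ, A⟧_k`: the conjunction of the elements of `Γ` instantiated for the atoms
occurring in the `k`-times unfolding of `A` (by the definite clauses `D`). -/
def KSem (D : List (DClause PV ar)) (ρ : Interp PV ar) (Γ : List (GTuple PV ar)) :
    ℕ → List (AAtom PV ar) → Assign → Prop
  | 0, A, s => GammaSem ρ Γ A s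
  | k + 1, A, s =>
      GammaSem ρ Γ A s ∧
      ∀ b ∈ A, ∃ c ∈ D, ∃ s' : Assign,
        c.fml.eval s' ∧
        (⟨c.pv, fun i => (c.args i).eval s'⟩ : (Q : PV) × (Fin (ar Q) → ℤ)) =
          AAtom.den s b ∧
        KSem D ρ Γ k (annotate c.atoms (insert b.idn b.M) none) s'

/-- `⊨ φ ⇒ In(P(t̄), A)` where `In(P(t̄), A) = ⋁_{P(t̄') ∈ A} t̄ = t̄'`. -/
def validIn (φ : Fml) (a : Atom PV ar) (A : List (AAtom PV ar)) : Prop :=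
  ∀ s : Assign, φ.eval s → ∃ b ∈ A, Atom.den s a = AAtom.den s b

/-- `⊨ φ ⇒ In(σg, A)`. -/
def validInG (φ : Fml) (σ : Subst) (g : Guard PV ar) (A : List (AAtom PV ar)) : Prop :=
  match g with
  | .bullet => True
  | .hyp α a => ∀ s : Assign, φ.eval s →
      ∃ b ∈ A, (some α : Option ℕ) ∈ b.M ∧ Atom.den s (a.subst σ) = AAtom.den s b

/-- `⊨ φ ⇒ Sub(A₁, A₂)` where `Sub(A₁, A₂) = ⋀_{P(t̄) ∈ A₁} In(P(t̄), A₂)`. -/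
def validSub (φ : Fml) (A₁ A₂ : List (AAtom PV ar)) : Prop :=
  ∀ s : Assign, φ.eval s → ∀ a ∈ A₁, ∃ b ∈ A₂, AAtom.den s a = AAtom.den s b

def validSubAtoms (φ : Fml) (A₁ : List (Atom PV ar)) (A₂ : List (AAtom PV ar)) : Prop :=
  ∀ s : Assign, φ.eval s → ∀ a ∈ A₁, ∃ b ∈ A₂, Atom.den s a = AAtom.den s b

/-- `⊨ φ ⇒ ∃x̄.ψ`, where `x̄` is a given finite set of variables. -/
def validExists (φ : Fml) (ψ : Fml) (xs : Finset Var) : Prop :=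
  ∀ s : Assign, φ.eval s → ∃ s' : Assign, (∀ x, x ∉ xs → s' x = s x) ∧ ψ.eval s'

/-- The induction identifier `α` occurs in `A`. -/
def occursA (α : ℕ) (A : List (AAtom PV ar)) : Prop :=
  ∃ b ∈ A, (some α : Option ℕ) ∈ b.M ∨ b.idn = some α

def Guard.ident : Guard PV ar → Option ℕ
  | .bullet => none
  | .hyp α _ => some α

/-- The induction identifier `α` occurs in `Γ`. -/
def occursG (α : ℕ) (Γ : List (GTuple PV ar)) : Prop :=
  ∃ γ ∈ Γ, γ.g.ident = some α ∨ occursA α γ.A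

/-!
The new atom `P^{∅,∘}(t̄)` carries no induction identifier, so it triggers no induction
hypothesis of `Γ` and `⟦Γ⟧` is unchanged by adding it. Unfolding it produces only atoms
annotated with `{∘}`, which again trigger nothing; so beyond the user lemmas of `Γ`, all that
`⟦Γ, -⟧_k` asks of these atoms is that they can be unfolded `k` times. This holds because
`μ(D)` is a post-fixpoint of the one-step unfolding: every fact of `μ(D)` is derived by some
clause of `D` from facts of `μ(D)`.
-/

section LeastModel

variable {D : List (DClause PV ar)}

lemma mem_muD_iff {P : PV} {v : Fin (ar P) → ℤ} :
    v ∈ muD D P ↔ ∀ ρ : Interp PV ar, (∀ c ∈ D, c.sat ρ) → v ∈ ρ P := by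
  simp [muD, sInf_apply]

lemma muD_subset {ρ : Interp PV ar} (hρ : ∀ c ∈ D, c.sat ρ) (P : PV) : muD D P ⊆ ρ P :=
  fun _ hv => mem_muD_iff.mp hv ρ hρ

lemma muD_sat : ∀ c ∈ D, c.sat (muD D) :=
  fun c hc s ⟨hA, hf⟩ => mem_muD_iff.mpr fun _ hρ =>
    hρ c hc s ⟨fun a ha => muD_subset hρ a.pv (hA a ha), hf⟩

lemma Dstep_sat {ρ : Interp PV ar} (hρ : ∀ P, Dstep D ρ P ⊆ ρ P) :
    ∀ c ∈ D, c.sat (Dstep D ρ) :=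
  fun c hc s ⟨hA, hf⟩ => ⟨c, hc, s, fun a ha => hρ a.pv (hA a ha), hf, rfl⟩

lemma Dstep_muD_subset (P : PV) : Dstep D (muD D) P ⊆ muD D P := by
  rintro v ⟨c, hc, s, hA, hf, hden⟩
  cases hden
  exact muD_sat c hc s ⟨hA, hf⟩

lemma muD_subset_Dstep (P : PV) : muD D P ⊆ Dstep D (muD D) P :=
  muD_subset (Dstep_sat Dstep_muD_subset) P

end LeastModel

section Semantics

variable {D : List (DClause PV ar)} {ρ : Interp PV ar} {Γ : List (GTuple PV ar)}

lemma GammaSem.mono {A A' : List (AAtom PV ar)} {s s' : Assign} (hG : GammaSem ρ Γ A s)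
    (hA : ∀ b' ∈ A', ∀ α : ℕ, some α ∈ b'.M →
      ∃ b ∈ A, some α ∈ b.M ∧ AAtom.den s b = AAtom.den s' b') :
    GammaSem ρ Γ A' s' := by
  intro γ hγ
  have hγsem := hG γ hγ
  unfold GTuple.sem at hγsem ⊢
  cases hg : γ.g with
  | bullet => simpa only [hg] using hγsem
  | hyp α a₀ =>
    simp only [hg] at hγsem
    intro b' hb' hα s'' ⟨hsat, hf, hden⟩
    obtain ⟨b, hb, hbα, hbden⟩ := hA b' hb' α hα
    exact hγsem b hb hbα s'' ⟨hsat, hf, hden.trans hbden.symm⟩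

lemma KSem.gammaSem {k : ℕ} {A : List (AAtom PV ar)} {s : Assign}
    (h : KSem D ρ Γ k A s) : GammaSem ρ Γ A s := by
  cases k with
  | zero => exact h
  | succ k => exact h.1

lemma ksem_of_unannotated (hρ : ∀ P, ρ P ⊆ Dstep D ρ P) {s₀ : Assign}
    (hΓ : GammaSem ρ Γ [] s₀) (k : ℕ) :
    ∀ (A : List (AAtom PV ar)) (s : Assign),
      (∀ b ∈ A, b.M ⊆ {none} ∧ b.idn = none ∧ b.sat ρ s) → KSem D ρ Γ k A s := by
  have hΓA : ∀ (A : List (AAtom PV ar)) (s : Assign), (∀ b ∈ A, b.M ⊆ {none}) →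
      GammaSem ρ Γ A s := fun A s hA =>
    hΓ.mono fun b hb α hα => absurd (hA b hb hα) (by simp)
  induction k with
  | zero => exact fun A s hA => hΓA A s fun b hb => (hA b hb).1
  | succ k ih =>
    refine fun A s hA => ⟨hΓA A s fun b hb => (hA b hb).1, fun b hb => ?_⟩
    obtain ⟨hM, hidn, hsat⟩ := hA b hb
    obtain ⟨c, hc, s', hcatoms, hcf, hden⟩ := hρ b.pv hsat
    refine ⟨c, hc, s', hcf, hden, ih _ s' ?_⟩
    simp only [annotate, List.mem_map]
    rintro _ ⟨a, ha, rfl⟩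
    exact ⟨Finset.insert_subset (by simp [hidn]) hM, rfl, hcatoms a ha⟩

end Semantics

/-- `μ(D) ⊨ ⟦Γ, A⟧_k ∧ P(t̄) ⇒ ⟦Γ, A ∪ {P^{∅,∘}(t̄)}⟧_k`. -/
theorem ksem_extend_atom (D : List (DClause PV ar)) (Γ : List (GTuple PV ar))
    (A : List (AAtom PV ar)) (a : Atom PV ar) (k : ℕ) :
    ∀ s : Assign,
      KSem D (muD D) Γ k A s ∧ a.sat (muD D) s →
      KSem D (muD D) Γ k (⟨a.pv, a.args, ∅, none⟩ :: A) s := by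
  rintro s ⟨hK, ha⟩
  have hG : GammaSem (muD D) Γ (⟨a.pv, a.args, ∅, none⟩ :: A) s := by
    refine hK.gammaSem.mono fun b hb α hα => ⟨b, ?_, hα, rfl⟩
    rcases List.mem_cons.mp hb with rfl | hb
    · simp at hα
    · exact hb
  cases k with
  | zero => exact hG
  | succ k =>
    have hΓ : GammaSem (muD D) Γ [] s := hK.gammaSem.mono (by simp)
    have hnew := ksem_of_unannotated muD_subset_Dstep hΓ (k + 1) [⟨a.pv, a.args, ∅, none⟩] s
      (by simp only [List.mem_singleton, forall_eq]; exact ⟨by simp, trivial, ha⟩)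
    exact ⟨hG, List.forall_mem_cons.mpr ⟨hnew.2 _ List.mem_cons_self, hK.2⟩⟩
end

section
/- (Complete induction principle on derivations for the least model.) For every finite set D of definite clauses, every predicate variable P occurring in D, and every formula φ with fv(φ) ⊆ {x̄}: μ(D) ⊨ (∀x̄.((∀p ≺ P. {P ↦ λx̄.φ}p(x̄)) ⇒ φ)) ⇒ ∀x̄.(P(x̄) ⇒ φ), where p ≺ P ranges over the predicates obtained by unfolding P (by the clauses of D) at least once, and {P ↦ λx̄.φ}p denotes p with every occurrence of the predicate variable P replaced by λx̄.φ. Equivalently: if for every x̄ ∈ ℤ^{ar(P)}, whenever every atom P(x̄') occurring in a strict sub-derivation of a μ(D)-derivation of P(x̄) satisfies φ[x̄'/x̄], one has φ, then every x̄ with x̄ ∈ μ(D)(P) satisfies φ. -/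
variable {PV : Type} {ar : PV → ℕ}

lemma atom_sat_mono {ρ ρ' : Interp PV ar} (h : ∀ Q, ρ Q ⊆ ρ' Q)
    {s : Assign} {a : Atom PV ar} (ha : a.sat ρ s) : a.sat ρ' s := h _ ha

lemma muD_le_of_model {D : List (DClause PV ar)} {ρ : Interp PV ar}
    (h : ∀ c ∈ D, c.sat ρ) : ∀ Q, muD D Q ⊆ ρ Q := by
  intro Q
  have : muD D ≤ ρ := sInf_le h
  exact this Q

lemma muD_model (D : List (DClause PV ar)) : ∀ c ∈ D, c.sat (muD D) := by
  intro c hc s hs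
  have : ∀ ρ ∈ {ρ : Interp PV ar | ∀ c ∈ D, c.sat ρ}, (fun i => (c.args i).eval s) ∈ ρ c.pv := by
    intro ρ hρ
    exact hρ c hc s ⟨fun a ha => muD_le_of_model hρ _ (hs.1 a ha), hs.2⟩
  intro ρ hρ
  simp only [Set.mem_range] at hρ
  obtain ⟨⟨ρ', hρ'⟩, rfl⟩ := hρ
  exact this ρ' hρ'

lemma dstep_mono {D : List (DClause PV ar)} {ρ ρ' : Interp PV ar}
    (h : ∀ Q, ρ Q ⊆ ρ' Q) (Q : PV) : Dstep D ρ Q ⊆ Dstep D ρ' Q := by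
  rintro v ⟨c, hc, s, hA, hf, hd⟩
  exact ⟨c, hc, s, fun a ha => h _ (hA a ha), hf, hd⟩

/-- **Complete induction principle on derivations for the least model.**
For every `P` occurring in `D` and every predicate `φ` (on `ℤ^(ar P)`, the denotation
of a formula with `fv(φ) ⊆ {x̄}`):
`μ(D) ⊨ (∀x̄.((∀p ≺ P. {P ↦ λx̄.φ}p(x̄)) ⇒ φ)) ⇒ ∀x̄.(P(x̄) ⇒ φ)`,
where `p ≺ P` ranges over the predicates obtained by unfolding `P` (by the clauses of
`D`, with `P` replaced by `λx̄.φ`) at least once, i.e. the `k`-fold iterates (`k ≥ 1`)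
of `T ↦ Dstep D (μ(D)[P := T]) P` applied to the denotation of `φ`. -/
theorem least_model_complete_induction [DecidableEq PV] (D : List (DClause PV ar))
    (P : PV) (hocc : ∃ c ∈ D, c.pv = P ∨ ∃ a ∈ c.atoms, a.pv = P)
    (φ : Set (Fin (ar P) → ℤ)) :
    (∀ v, (∀ k : ℕ, 1 ≤ k →
        v ∈ (fun T : Set (Fin (ar P) → ℤ) =>
              Dstep D (Function.update (muD D) P T) P)^[k] φ) →
      v ∈ φ) →
    ∀ v ∈ muD D P, v ∈ φ := by
  intro hind v hv
  set F : Set (Fin (ar P) → ℤ) → Set (Fin (ar P) → ℤ) :=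
    fun T => Dstep D (Function.update (muD D) P T) P with hF
  set S : Set (Fin (ar P) → ℤ) := muD D P ∩ ⋂ k : ℕ, F^[k] φ with hS
  have hSmu : S ⊆ muD D P := Set.inter_subset_left
  have hSk : ∀ k, S ⊆ F^[k] φ := fun k =>
    Set.inter_subset_right.trans (Set.iInter_subset _ k)
  -- the updated interpretation is below muD
  have hle : ∀ Q, Function.update (muD D) P S Q ⊆ muD D Q := by
    intro Q
    rcases eq_or_ne Q P with rfl | hne
    · simpa using hSmu
    · simp [Function.update_of_ne hne]
  -- it is a model of D
  have hmodel : ∀ c ∈ D, c.sat (Function.update (muD D) P S) := by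
    intro c hc s hs
    have hmu : (fun i => (c.args i).eval s) ∈ muD D c.pv :=
      muD_model D c hc s ⟨fun a ha => atom_sat_mono hle (hs.1 a ha), hs.2⟩
    rcases eq_or_ne c.pv P with hP | hne
    · subst hP
      rw [Function.update_self]
      have hstep : (fun i => (c.args i).eval s) ∈ F S :=
        ⟨c, hc, s, hs.1, hs.2, rfl⟩
      have key : ∀ T, S ⊆ T → (fun i => (c.args i).eval s) ∈ F T := by
        intro T hT
        exact dstep_mono (fun Q => by
          rcases eq_or_ne Q c.pv with rfl | hne
          · simpa using hT
          · simp [Function.update_of_ne hne]) c.pv hstep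
      have hFk : ∀ k, (fun i => (c.args i).eval s) ∈ F^[k] φ := by
        intro k
        cases k with
        | zero =>
          refine hind _ (fun j hj => ?_)
          obtain ⟨j, rfl⟩ := Nat.exists_eq_add_of_le hj
          rw [Function.iterate_add_apply, Function.iterate_one]
          exact key _ (hSk j)
        | succ k =>
          rw [Function.iterate_succ_apply']
          exact key _ (hSk k)
      exact ⟨hmu, Set.mem_iInter.2 hFk⟩
    · rw [Function.update_of_ne hne]
      exact hmu
  have : muD D P ⊆ S := by
    have := muD_le_of_model hmodel P
    simpa using this
  exact (hSk 0) (this hv)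
end

section
/- Suppose P occurs in the finite set D of definite clauses, P^{M,∘}(t̄) ∈ A, the induction identifier α does not occur in A, and for some k ∈ ℕ: μ(D) ⊨ ⟦{(α ▷ P(t̄), A, φ, h)}, {P^{M,α}(t̄)}⟧_k ∧ ⋀A ∧ φ ⇒ h. Then μ(D) ⊨ ⋀A ∧ φ ⇒ h. -/
variable {PV : Type} {ar : PV → ℕ}

/-!
Every fact of `μ(D)` is derived after finitely many unfoldings of `D`, so it suffices to prove
`⋀A ∧ φ ⇒ h` for the assignments under which `P(t̄)` holds in the `n`-th Kleene approximant of
`μ(D)`, by strong induction on `n`. Unfolding `P^{M,α}(t̄)` along its derivation, every atom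
that inherits `α` in its identifier set is derived in fewer than `n` steps, so each instance of
the induction hypothesis `α ▷ P(t̄)` met in `⟦Γ, {P^{M,α}(t̄)}⟧_k` is covered by the outer
induction hypothesis.
-/

theorem Dstep_mono (D : List (DClause PV ar)) : Monotone (Dstep D) := by
  rintro ρ ρ' hρ P v ⟨c, hc, s, hatoms, hfml, hden⟩
  exact ⟨c, hc, s, fun a ha => hρ _ (hatoms a ha), hfml, hden⟩

theorem Atom.sat_of_den_eq {ρ : Interp PV ar} {s s' : Assign} {a : Atom PV ar}
    {b : AAtom PV ar} (hden : a.den s' = b.den s) (hb : b.sat ρ s) : a.sat ρ s' :=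
  show (a.den s').2 ∈ ρ (a.den s').1 from hden ▸ hb

section Approximants

variable (D : List (DClause PV ar))

def approx : ℕ → Interp PV ar
  | 0 => ⊥
  | n + 1 => Dstep D (approx n)

theorem approx_mono : Monotone (approx D) := by
  refine monotone_nat_of_le_succ fun n => ?_
  induction n with
  | zero => exact bot_le
  | succ n ih => exact Dstep_mono D ih

def approxSup : Interp PV ar := fun P => ⋃ n, approx D n P

theorem exists_approx_of_forall_sat_approxSup (s : Assign) (l : List (Atom PV ar))
    (hl : ∀ a ∈ l, a.sat (approxSup D) s) : ∃ N, ∀ a ∈ l, a.sat (approx D N) s := by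
  induction l with
  | nil => exact ⟨0, by simp⟩
  | cons a l ih =>
    obtain ⟨n, hn⟩ := Set.mem_iUnion.mp (hl a List.mem_cons_self)
    obtain ⟨N, hN⟩ := ih fun a' ha' => hl a' (List.mem_cons_of_mem a ha')
    refine ⟨max n N, List.forall_mem_cons.mpr ⟨?_, fun a' ha' => ?_⟩⟩
    · exact approx_mono D (le_max_left n N) _ hn
    · exact approx_mono D (le_max_right n N) _ (hN a' ha')

theorem approxSup_sat : ∀ c ∈ D, c.sat (approxSup D) := by
  intro c hc s ⟨hatoms, hfml⟩
  obtain ⟨N, hN⟩ := exists_approx_of_forall_sat_approxSup D s c.atoms hatoms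
  exact Set.mem_iUnion.mpr ⟨N + 1, c, hc, s, hN, hfml, rfl⟩

theorem muD_le_approxSup : muD D ≤ approxSup D :=
  sInf_le (approxSup_sat D)

theorem AAtom.exists_sat_approx_of_sat_muD {s : Assign} {b : AAtom PV ar}
    (hb : b.sat (muD D) s) : ∃ n, b.sat (approx D n) s :=
  Set.mem_iUnion.mp (muD_le_approxSup D _ hb)

end Approximants

section InductionHypothesis

variable {D : List (DClause PV ar)} {ρ : Interp PV ar} {α n : ℕ} {a₀ : Atom PV ar}
  {A : List (AAtom PV ar)} {φ : Fml} {h : Option (Atom PV ar)}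

def RankedBelow (D : List (DClause PV ar)) (α n : ℕ) (s : Assign) (A' : List (AAtom PV ar)) :
    Prop :=
  ∀ b ∈ A', ∃ m, b.sat (approx D m) s ∧ (some α ∈ b.M → m < n) ∧ (b.idn = some α → m ≤ n)

theorem RankedBelow.exists_unfolding {s : Assign} {A' : List (AAtom PV ar)}
    (hA' : RankedBelow D α n s A') {b : AAtom PV ar} (hb : b ∈ A') :
    ∃ c ∈ D, ∃ s' : Assign, c.fml.eval s' ∧
      (⟨c.pv, fun i => (c.args i).eval s'⟩ : (Q : PV) × (Fin (ar Q) → ℤ)) = b.den s ∧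
      RankedBelow D α n s' (annotate c.atoms (insert b.idn b.M) none) := by
  obtain ⟨m, hbm, hM, hidn⟩ := hA' b hb
  cases m with
  | zero => exact hbm.elim
  | succ m =>
    obtain ⟨c, hc, s', hatoms, hfml, hden⟩ := hbm
    refine ⟨c, hc, s', hfml, hden, ?_⟩
    simp only [RankedBelow, annotate, List.mem_map]
    rintro _ ⟨a, ha, rfl⟩
    refine ⟨m, hatoms a ha, fun hα => ?_, nofun⟩
    rcases Finset.mem_insert.mp hα with hα | hα
    · exact hidn hα.symm
    · exact Nat.lt_of_succ_lt (hM hα)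

theorem gammaSem_of_rankedBelow
    (ih : ∀ m < n, ∀ s, AList.sat ρ s A ∧ φ.eval s ∧ a₀.sat (approx D m) s → headSat ρ s h)
    {s : Assign} {A' : List (AAtom PV ar)} (hA' : RankedBelow D α n s A') :
    GammaSem ρ [⟨.hyp α a₀, A, φ, h⟩] A' s := by
  intro γ hγ
  obtain rfl := List.mem_singleton.mp hγ
  intro b hb hαb s' ⟨hA, hφ, hden⟩
  obtain ⟨m, hbm, hM, -⟩ := hA' b hb
  exact ih m (hM hαb) s' ⟨hA, hφ, a₀.sat_of_den_eq hden hbm⟩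

theorem kSem_of_rankedBelow
    (ih : ∀ m < n, ∀ s, AList.sat ρ s A ∧ φ.eval s ∧ a₀.sat (approx D m) s → headSat ρ s h)
    (k : ℕ) {s : Assign} {A' : List (AAtom PV ar)} (hA' : RankedBelow D α n s A') :
    KSem D ρ [⟨.hyp α a₀, A, φ, h⟩] k A' s := by
  induction k generalizing s A' with
  | zero => exact gammaSem_of_rankedBelow ih hA'
  | succ k ihk =>
    refine ⟨gammaSem_of_rankedBelow ih hA', fun b hb => ?_⟩
    obtain ⟨c, hc, s', hfml, hden, hranked⟩ := hA'.exists_unfolding hb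
    exact ⟨c, hc, s', hfml, hden, ihk hranked⟩

theorem headSat_of_sat_approx {k : ℕ} {b : AAtom PV ar} (hαb : some α ∉ b.M)
    (hyp : ∀ s : Assign,
      KSem D ρ [⟨.hyp α ⟨b.pv, b.args⟩, A, φ, h⟩] k [⟨b.pv, b.args, b.M, some α⟩] s ∧
        AList.sat ρ s A ∧ φ.eval s → headSat ρ s h)
    (n : ℕ) (s : Assign) (hs : AList.sat ρ s A ∧ φ.eval s ∧ b.sat (approx D n) s) :
    headSat ρ s h := by
  induction n using Nat.strong_induction_on generalizing s with
  | _ n ih =>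
    obtain ⟨hA, hφ, hbn⟩ := hs
    have hranked : RankedBelow D α n s [⟨b.pv, b.args, b.M, some α⟩] := by
      intro b' hb'
      obtain rfl := List.mem_singleton.mp hb'
      exact ⟨n, hbn, fun hα => absurd hα hαb, fun _ => le_rfl⟩
    exact hyp s ⟨kSem_of_rankedBelow ih k hranked, hA, hφ⟩

end InductionHypothesis

theorem discharge_induction_hypothesis_general (D : List (DClause PV ar)) (b : AAtom PV ar)
    (A : List (AAtom PV ar)) (φ : Fml) (h : Option (Atom PV ar)) (α : ℕ) (k : ℕ)
    (hb : b ∈ A) (hα : ¬ occursA α A) :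
    (∀ s : Assign,
      KSem D (muD D) [⟨Guard.hyp α ⟨b.pv, b.args⟩, A, φ, h⟩] k
          [⟨b.pv, b.args, b.M, some α⟩] s ∧
        AList.sat (muD D) s A ∧ φ.eval s →
      headSat (muD D) s h) →
    ∀ s : Assign, AList.sat (muD D) s A ∧ φ.eval s → headSat (muD D) s h := by
  intro hyp s ⟨hA, hφ⟩
  obtain ⟨n, hn⟩ := AAtom.exists_sat_approx_of_sat_muD D (hA b hb)
  exact headSat_of_sat_approx (fun hαb => hα ⟨b, hb, .inl hαb⟩) hyp n s ⟨hA, hφ, hn⟩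

/-- If `P` occurs in `D`, `P^{M,∘}(t̄) ∈ A`, `α` does not occur in
`A`, and `μ(D) ⊨ ⟦{(α ▷ P(t̄), A, φ, h)}, {P^{M,α}(t̄)}⟧_k ∧ ⋀A ∧ φ ⇒ h` for some `k`,
then `μ(D) ⊨ ⋀A ∧ φ ⇒ h`. -/
theorem discharge_induction_hypothesis (D : List (DClause PV ar)) (b : AAtom PV ar)
    (A : List (AAtom PV ar)) (φ : Fml) (h : Option (Atom PV ar)) (α : ℕ) (k : ℕ)
    (hocc : ∃ c ∈ D, c.pv = b.pv ∨ ∃ a ∈ c.atoms, a.pv = b.pv)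
    (hb : b ∈ A) (hidn : b.idn = none) (hα : ¬ occursA α A) :
    (∀ s : Assign,
      KSem D (muD D) [⟨Guard.hyp α ⟨b.pv, b.args⟩, A, φ, h⟩] k
          [⟨b.pv, b.args, b.M, some α⟩] s ∧
        AList.sat (muD D) s A ∧ φ.eval s →
      headSat (muD D) s h) →
    ∀ s : Assign, AList.sat (muD D) s A ∧ φ.eval s → headSat (muD D) s h :=
  discharge_induction_hypothesis_general D b A φ h α k hb hα
end
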